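/- Let u be a bounded measurable 2π-periodic function and let μ_u be the probability measure on [0,2π] with density e^{−u(θ)} / ∫₀^{2π} e^{−u}. Define DΓ[u](v)(θ) = ∫ v dμ_u · ∫ K̂(θ − θ') dμ_u(θ') − ∫ K̂(θ − θ') v(θ') dμ_u(θ'), and let φ_n(θ) = (1/√π) cos(2nθ). Then for all n, m ≥ 1, the matrix entry a_{nm}(u) = ∫₀^{2π} DΓ[u](φ_n)(θ) φ_m(θ) dθ satisfies a_{nm}(u) = k_m [ ∫ cos(2nθ) dμ_u · ∫ cos(2mθ) dμ_u − ∫ cos(2nθ) cos(2mθ) dμ_u ], and in particular |a_{nm}(u)| ≤ |k_m|. -/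

import Mathlib

open MeasureTheory Filter Topology Real intervalIntegral

/-- `Γ[u](θ) = (∫₀^{2π} e^{-u})⁻¹ ∫₀^{2π} K̂(θ - θ') e^{-u(θ')} dθ'`. -/
noncomputable def Gam (K u : ℝ → ℝ) (θ : ℝ) : ℝ :=
  (∫ t in (0:ℝ)..(2 * π), Real.exp (-(u t)))⁻¹ *
    ∫ t in (0:ℝ)..(2 * π), K (θ - t) * Real.exp (-(u t))

/-- Membership in `X = {u ∈ L²([0,2π]) : u(θ) = u(θ+π) a.e., u(θ) = u(2π-θ) a.e.,
∫₀^{2π} u = 0}`, for a (2π-periodic) representative `u : ℝ → ℝ`. -/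
def MemX (u : ℝ → ℝ) : Prop :=
  MemLp u 2 (volume.restrict (Set.Ioc (0:ℝ) (2 * π))) ∧
  (∀ᵐ θ : ℝ, u (θ + π) = u θ) ∧
  (∀ᵐ θ : ℝ, u (2 * π - θ) = u θ) ∧
  (∫ θ in (0:ℝ)..(2 * π), u θ) = 0

/-- `‖K̂‖_∞ = sup_{θ ∈ [0,2π]} |K̂(θ)|`. -/
noncomputable def supNorm (K : ℝ → ℝ) : ℝ := ⨆ θ : Set.Icc (0:ℝ) (2 * π), |K θ|

/-- The mean `∫₀^{2π} f dμ_u` of `f` against the probability measure `μ_u` with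
density `e^{-u}/∫₀^{2π} e^{-u}`. -/
noncomputable def mAvg (u f : ℝ → ℝ) : ℝ :=
  (∫ t in (0:ℝ)..(2 * π), Real.exp (-(u t)))⁻¹ *
    ∫ t in (0:ℝ)..(2 * π), f t * Real.exp (-(u t))

/-- The Gâteaux derivative of `Γ` at `u`:
`DΓ[u](v)(θ) = ∫ v dμ_u ∫ K̂(θ-θ') dμ_u - ∫ K̂(θ-θ') v(θ') dμ_u(θ')`. -/
noncomputable def DGammaU (K u v : ℝ → ℝ) (θ : ℝ) : ℝ :=
  mAvg u v * mAvg u (fun t => K (θ - t)) - mAvg u (fun t => K (θ - t) * v t)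

/-- `φₙ(θ) = (1/√π) cos(2nθ)`. -/
noncomputable def phi (n : ℕ) (θ : ℝ) : ℝ := (1 / Real.sqrt π) * Real.cos (2 * n * θ)


/-!
Writing `μ_u` for the normalised measure,
`DΓ[u](v)(θ) = ∫ (∫ v dμ_u - v t) K̂(θ - t) dμ_u(t)`. Pairing with `φ_m` and exchanging the two
integrals (Fubini) leaves the inner integral `∫₀^{2π} K̂(θ - t) φ_m(θ) dθ = π k_m φ_m(t)`, computed
termwise from the cosine series: `φ_m` is an eigenfunction of convolution with `K̂`. Hence
`a_{nm} = -k_m cov_{μ_u}(cos 2n·, cos 2m·)`, and two functions bounded by `1` have covariance at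
most `1` in absolute value, because `4 cov(X, Y) = Var(X + Y) - Var(X - Y)` and Popoviciu's
inequality bounds both variances by `4`.
-/

theorem integral_cos_int_mul_sub (c : ℤ) (s : ℝ) :
    ∫ θ in (0:ℝ)..2 * π, cos (c * θ - s) = if c = 0 then 2 * π * cos s else 0 := by
  split_ifs with hc
  · simp [hc]
  · have hc' : (c : ℝ) ≠ 0 := by exact_mod_cast hc
    rw [intervalIntegral.integral_comp_mul_sub (f := cos) hc', integral_cos, mul_zero,
      show (c : ℝ) * (2 * π) - s = -s + c * (2 * π) by ring, sin_add_int_mul_two_pi, zero_sub,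
      sub_self, smul_zero]

theorem integral_cos_mul_sub_mul_cos {a b : ℕ} (ha : 0 < a) (hb : 0 < b) (t : ℝ) :
    ∫ θ in (0:ℝ)..2 * π, cos (a * (θ - t)) * cos (b * θ) =
      if a = b then π * cos (b * t) else 0 := by
  have hprod (θ : ℝ) : cos (a * (θ - t)) * cos (b * θ) =
      (cos (((a - b : ℤ) : ℝ) * θ - a * t) + cos (((a + b : ℤ) : ℝ) * θ - a * t)) / 2 := by
    push_cast
    rw [show (a - b : ℝ) * θ - a * t = a * (θ - t) - b * θ by ring,
      show (a + b : ℝ) * θ - a * t = a * (θ - t) + b * θ by ring, cos_sub, cos_add]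
    ring
  have hint (c : ℤ) : IntervalIntegrable (fun θ => cos (c * θ - a * t)) volume 0 (2 * π) :=
    (by fun_prop : Continuous _).intervalIntegrable _ _
  simp_rw [hprod]
  rw [intervalIntegral.integral_div, intervalIntegral.integral_add (hint _) (hint _),
    integral_cos_int_mul_sub, integral_cos_int_mul_sub, if_neg (show (a + b : ℤ) ≠ 0 by omega)]
  by_cases hab : a = b
  · subst hab
    rw [if_pos (sub_self _), if_pos rfl]
    ring
  · rw [if_neg (show (a - b : ℤ) ≠ 0 by omega), if_neg hab]; ring

theorem abs_mul_cos_le (c x : ℝ) : |c * cos x| ≤ |c| := by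
  rw [abs_mul]
  exact mul_le_of_le_one_right (abs_nonneg c) (abs_cos_le_one x)

section CosineSeries

variable {K : ℝ → ℝ} {k : ℕ → ℝ}

theorem continuous_of_hasSum_cos (hsum : Summable fun m => |k m|)
    (hK : ∀ θ, HasSum (fun m : ℕ => k (m + 1) * cos (2 * (m + 1) * θ)) (K θ)) :
    Continuous K := by
  have hK_eq : K = fun θ => ∑' m : ℕ, k (m + 1) * cos (2 * (m + 1) * θ) :=
    funext fun θ => (hK θ).tsum_eq.symm
  rw [hK_eq]
  exact continuous_tsum (fun m => by fun_prop) ((summable_nat_add_iff 1).2 hsum)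
    fun _ _ => abs_mul_cos_le _ _

theorem abs_le_tsum_of_hasSum_cos (hsum : Summable fun m => |k m|)
    (hK : ∀ θ, HasSum (fun m : ℕ => k (m + 1) * cos (2 * (m + 1) * θ)) (K θ)) (θ : ℝ) :
    |K θ| ≤ ∑' m, |k (m + 1)| :=
  (hK θ).norm_le_of_bounded ((summable_nat_add_iff 1).2 hsum).hasSum fun _ => abs_mul_cos_le _ _

theorem integral_comp_sub_mul_cos (hsum : Summable fun m => |k m|)
    (hK : ∀ θ, HasSum (fun m : ℕ => k (m + 1) * cos (2 * (m + 1) * θ)) (K θ))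
    {m : ℕ} (hm : 1 ≤ m) (t : ℝ) :
    ∫ θ in (0:ℝ)..2 * π, K (θ - t) * cos (2 * m * θ) = π * k m * cos (2 * m * t) := by
  have hterm (j : ℕ) :
      ∫ θ in (0:ℝ)..2 * π, k (j + 1) * cos (2 * (j + 1) * (θ - t)) * cos (2 * m * θ) =
        if j = m - 1 then π * k m * cos (2 * m * t) else 0 := by
    simp_rw [mul_assoc (k _), intervalIntegral.integral_const_mul]
    have h := integral_cos_mul_sub_mul_cos (a := 2 * (j + 1)) (b := 2 * m) (by omega) (by omega) t
    push_cast at h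
    rw [h]
    split_ifs with hfreq hidx hidx
    · subst hidx; rw [Nat.sub_add_cancel hm]; ring
    · omega
    · omega
    · simp
  have hseries := intervalIntegral.hasSum_integral_of_dominated_convergence
    (F := fun j θ => k (j + 1) * cos (2 * (j + 1) * (θ - t)) * cos (2 * m * θ))
    (f := fun θ => K (θ - t) * cos (2 * m * θ)) (μ := volume) (a := 0) (b := 2 * π)
    (fun j _ => |k (j + 1)|) (fun j => (by fun_prop : Continuous _).aestronglyMeasurable)
    (fun j => ae_of_all _ fun θ _ => by
      rw [Real.norm_eq_abs, abs_mul]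
      exact (mul_le_of_le_one_right (abs_nonneg _) (abs_cos_le_one _)).trans
        (abs_mul_cos_le _ _))
    (ae_of_all _ fun _ _ => (summable_nat_add_iff 1).2 hsum) intervalIntegrable_const
    (ae_of_all _ fun θ _ => (hK (θ - t)).mul_right _)
  simp_rw [hterm] at hseries
  exact hseries.unique (hasSum_ite_eq _ _)

end CosineSeries

open ProbabilityTheory in
theorem ProbabilityTheory.abs_covariance_le_sq {Ω : Type*} [MeasurableSpace Ω] {μ : Measure Ω}
    [IsProbabilityMeasure μ] {X Y : Ω → ℝ} {c : ℝ} (hX : AEMeasurable X μ) (hY : AEMeasurable Y μ)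
    (hXc : ∀ᵐ ω ∂μ, |X ω| ≤ c) (hYc : ∀ᵐ ω ∂μ, |Y ω| ≤ c) :
    |cov[X, Y; μ]| ≤ c ^ 2 := by
  have hX2 : MemLp X 2 μ := memLp_of_bounded (hXc.mono fun _ h => abs_le.1 h)
    hX.aestronglyMeasurable 2
  have hY2 : MemLp Y 2 μ := memLp_of_bounded (hYc.mono fun _ h => abs_le.1 h)
    hY.aestronglyMeasurable 2
  have hadd_mem : ∀ᵐ ω ∂μ, (X + Y) ω ∈ Set.Icc (-(c + c)) (c + c) := by
    filter_upwards [hXc, hYc] with ω hx hy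
    exact abs_le.1 ((abs_add_le _ _).trans (add_le_add hx hy))
  have hsub_mem : ∀ᵐ ω ∂μ, (X - Y) ω ∈ Set.Icc (-(c + c)) (c + c) := by
    filter_upwards [hXc, hYc] with ω hx hy
    exact abs_le.1 ((abs_sub _ _).trans (add_le_add hx hy))
  have hadd := variance_le_sq_of_bounded hadd_mem (hX.add hY)
  have hsub := variance_le_sq_of_bounded hsub_mem (hX.sub hY)
  have hadd_nonneg := variance_nonneg (X + Y) μ
  have hsub_nonneg := variance_nonneg (X - Y) μ
  rw [variance_add hX2 hY2] at hadd hadd_nonneg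
  rw [variance_sub hX2 hY2] at hsub hsub_nonneg
  rw [abs_le]
  constructor <;> nlinarith

noncomputable def gibbsMeasure (u : ℝ → ℝ) : Measure ℝ :=
  (volume.restrict (Set.Ioc 0 (2 * π))).withDensity fun t =>
    ENNReal.ofReal ((∫ s in (0:ℝ)..2 * π, exp (-u s))⁻¹ * exp (-u t))

section GibbsMeasure

variable {u : ℝ → ℝ}

theorem mAvg_eq_integral (hu : Measurable u) (f : ℝ → ℝ) :
    mAvg u f = ∫ t, f t ∂gibbsMeasure u := by
  have hZ : 0 ≤ ∫ s in (0:ℝ)..2 * π, exp (-u s) :=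
    intervalIntegral.integral_nonneg two_pi_pos.le fun _ _ => (exp_pos _).le
  rw [gibbsMeasure, integral_withDensity_eq_integral_toReal_smul (by fun_prop)
    (ae_of_all _ fun _ => ENNReal.ofReal_lt_top)]
  simp_rw [ENNReal.toReal_ofReal (mul_nonneg (inv_nonneg.2 hZ) (exp_pos _).le), smul_eq_mul,
    mul_assoc, MeasureTheory.integral_const_mul, mul_comm (exp _)]
  simp only [mAvg, intervalIntegral.integral_of_le two_pi_pos.le]

theorem mAvg_const_mul (c : ℝ) (f : ℝ → ℝ) : mAvg u (fun t => c * f t) = c * mAvg u f := by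
  simp only [mAvg, mul_assoc, intervalIntegral.integral_const_mul]
  ring

variable (hu : Measurable u) {M : ℝ} (hM : ∀ θ, |u θ| ≤ M)
include hu hM

theorem isProbabilityMeasure_gibbsMeasure : IsProbabilityMeasure (gibbsMeasure u) := by
  have hint : IntegrableOn (fun t => exp (-u t)) (Set.Ioc 0 (2 * π)) :=
    IntegrableOn.of_bound measure_Ioc_lt_top (by fun_prop) (exp M) (ae_of_all _ fun t => by
      rw [Real.norm_eq_abs, abs_of_pos (exp_pos _), exp_le_exp]
      linarith [neg_abs_le (u t), hM t])
  have hZ : 0 < ∫ s in (0:ℝ)..2 * π, exp (-u s) :=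
    intervalIntegral.intervalIntegral_pos_of_pos_on
      ((intervalIntegrable_iff_integrableOn_Ioc_of_le two_pi_pos.le).2 hint)
      (fun _ _ => exp_pos _) two_pi_pos
  constructor
  rw [gibbsMeasure, withDensity_apply _ MeasurableSet.univ, Measure.restrict_univ,
    ← ofReal_integral_eq_lintegral_ofReal (hint.const_mul _)
      (ae_of_all _ fun _ => by positivity),
    MeasureTheory.integral_const_mul, ← intervalIntegral.integral_of_le two_pi_pos.le,
    inv_mul_cancel₀ hZ.ne', ENNReal.ofReal_one]

theorem integrable_gibbsMeasure {f : ℝ → ℝ} (hf : Measurable f) {C : ℝ} (hfC : ∀ t, |f t| ≤ C) :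
    Integrable f (gibbsMeasure u) :=
  haveI := isProbabilityMeasure_gibbsMeasure hu hM
  Integrable.of_bound hf.aestronglyMeasurable C (ae_of_all _ hfC)

theorem mAvg_centered_mul {X Y : ℝ → ℝ} (hX : Measurable X) {CX : ℝ} (hXC : ∀ t, |X t| ≤ CX)
    (hY : Measurable Y) {CY : ℝ} (hYC : ∀ t, |Y t| ≤ CY) :
    mAvg u (fun t => (mAvg u X - X t) * Y t) =
      mAvg u X * mAvg u Y - mAvg u (fun t => X t * Y t) := by
  have hYint := integrable_gibbsMeasure hu hM hY hYC
  simp only [mAvg_eq_integral hu, sub_mul]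
  rw [integral_sub (hYint.const_mul _) (hYint.bdd_mul hX.aestronglyMeasurable (ae_of_all _ hXC)),
    MeasureTheory.integral_const_mul]

open ProbabilityTheory in
theorem abs_mAvg_mul_sub_mAvg_mul_le {X Y : ℝ → ℝ} {c : ℝ} (hX : Measurable X)
    (hXc : ∀ t, |X t| ≤ c) (hY : Measurable Y) (hYc : ∀ t, |Y t| ≤ c) :
    |mAvg u X * mAvg u Y - mAvg u (fun t => X t * Y t)| ≤ c ^ 2 := by
  have := isProbabilityMeasure_gibbsMeasure hu hM
  have hX2 := memLp_of_bounded (ae_of_all (gibbsMeasure u) fun t => abs_le.1 (hXc t))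
    hX.aestronglyMeasurable 2
  have hY2 := memLp_of_bounded (ae_of_all (gibbsMeasure u) fun t => abs_le.1 (hYc t))
    hY.aestronglyMeasurable 2
  have hcov := abs_covariance_le_sq hX.aemeasurable hY.aemeasurable
    (ae_of_all (gibbsMeasure u) hXc) (ae_of_all _ hYc)
  rw [covariance_eq_sub hX2 hY2, abs_sub_comm] at hcov
  simpa only [mAvg_eq_integral hu, Pi.mul_apply] using hcov

theorem integral_mAvg_mul_swap {F : ℝ → ℝ → ℝ} (hF : Measurable (Function.uncurry F)) {C : ℝ}
    (hFC : ∀ θ t, |F θ t| ≤ C) {g : ℝ → ℝ} (hg : Measurable g) {G : ℝ} (hgG : ∀ θ, |g θ| ≤ G) :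
    ∫ θ in (0:ℝ)..2 * π, mAvg u (F θ) * g θ =
      mAvg u (fun t => ∫ θ in (0:ℝ)..2 * π, F θ t * g θ) := by
  have := isProbabilityMeasure_gibbsMeasure hu hM
  have hint : Integrable (Function.uncurry fun θ t => F θ t * g θ)
      ((volume.restrict (Set.Ioc 0 (2 * π))).prod (gibbsMeasure u)) := by
    refine Integrable.of_bound (by fun_prop) (C * G) (ae_of_all _ fun p => ?_)
    rw [Function.uncurry_apply_pair, Real.norm_eq_abs, abs_mul]
    exact mul_le_mul (hFC _ _) (hgG _) (abs_nonneg _) ((abs_nonneg _).trans (hFC 0 0))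
  simp only [intervalIntegral.integral_of_le two_pi_pos.le, mAvg_eq_integral hu,
    ← MeasureTheory.integral_mul_const]
  exact integral_integral_swap hint

end GibbsMeasure

section DGamma

variable {u K v : ℝ → ℝ} (hu : Measurable u) {M : ℝ} (hM : ∀ θ, |u θ| ≤ M)
  (hK : Measurable K) {B : ℝ} (hKB : ∀ x, |K x| ≤ B) (hv : Measurable v) {V : ℝ}
  (hvV : ∀ t, |v t| ≤ V)
include hu hM hK hKB hv hvV

theorem DGammaU_eq_mAvg (θ : ℝ) :
    DGammaU K u v θ = mAvg u (fun t => (mAvg u v - v t) * K (θ - t)) := by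
  rw [mAvg_centered_mul (Y := fun t => K (θ - t)) hu hM hv hvV (by fun_prop)
    fun t => hKB (θ - t)]
  simp only [DGammaU, mul_comm (K _)]

theorem integral_DGammaU_mul {g : ℝ → ℝ} (hg : Measurable g) {G : ℝ} (hgG : ∀ θ, |g θ| ≤ G) :
    ∫ θ in (0:ℝ)..2 * π, DGammaU K u v θ * g θ =
      mAvg u (fun t => (mAvg u v - v t) * ∫ θ in (0:ℝ)..2 * π, K (θ - t) * g θ) := by
  simp_rw [DGammaU_eq_mAvg hu hM hK hKB hv hvV]
  generalize mAvg u v = A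
  have hA (t : ℝ) : |A - v t| ≤ |A| + V := (abs_sub _ _).trans (by linarith [hvV t])
  rw [integral_mAvg_mul_swap hu hM (by fun_prop) (C := (|A| + V) * B) (fun θ t => by
    rw [abs_mul]
    exact mul_le_mul (hA t) (hKB _) (abs_nonneg _) ((abs_nonneg _).trans (hA 0))) hg hgG]
  simp only [mul_assoc, intervalIntegral.integral_const_mul]

end DGamma

theorem cos_eq_sqrt_pi_mul_phi (j : ℕ) (t : ℝ) : cos (2 * j * t) = √π * phi j t := by
  rw [phi, ← mul_assoc, mul_one_div_cancel (sqrt_pos.2 pi_pos).ne', one_mul]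

theorem continuous_phi (j : ℕ) : Continuous (phi j) := by
  unfold phi
  fun_prop

theorem abs_phi_le (j : ℕ) (t : ℝ) : |phi j t| ≤ 1 / √π := by
  rw [phi, abs_mul, abs_of_pos (by positivity)]
  exact mul_le_of_le_one_right (by positivity) (abs_cos_le_one _)

theorem integral_comp_sub_mul_phi {K : ℝ → ℝ} {k : ℕ → ℝ} (hsum : Summable fun m => |k m|)
    (hK : ∀ θ, HasSum (fun m : ℕ => k (m + 1) * cos (2 * (m + 1) * θ)) (K θ))
    {m : ℕ} (hm : 1 ≤ m) (t : ℝ) :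
    ∫ θ in (0:ℝ)..2 * π, K (θ - t) * phi m θ = π * k m * phi m t := by
  simp only [phi, mul_left_comm (K _), intervalIntegral.integral_const_mul,
    integral_comp_sub_mul_cos hsum hK hm]
  ring

theorem integral_DGammaU_phi_mul_phi {K u : ℝ → ℝ} {k : ℕ → ℝ} (hsum : Summable fun m => |k m|)
    (hK : ∀ θ, HasSum (fun m : ℕ => k (m + 1) * cos (2 * (m + 1) * θ)) (K θ))
    (hu : Measurable u) {M : ℝ} (hM : ∀ θ, |u θ| ≤ M) (n : ℕ) {m : ℕ} (hm : 1 ≤ m) :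
    ∫ θ in (0:ℝ)..2 * π, DGammaU K u (phi n) θ * phi m θ =
      π * k m * (mAvg u (phi n) * mAvg u (phi m) - mAvg u (fun t => phi n t * phi m t)) := by
  rw [integral_DGammaU_mul hu hM (continuous_of_hasSum_cos hsum hK).measurable
    (abs_le_tsum_of_hasSum_cos hsum hK) (continuous_phi n).measurable (abs_phi_le n)
    (continuous_phi m).measurable (abs_phi_le m)]
  simp_rw [integral_comp_sub_mul_phi hsum hK hm, mul_left_comm _ (π * k m), mAvg_const_mul]
  rw [mAvg_centered_mul hu hM (continuous_phi n).measurable (abs_phi_le n)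
    (continuous_phi m).measurable (abs_phi_le m)]

theorem matrix_entries_bound_general (K : ℝ → ℝ) (k : ℕ → ℝ)
    (hsum : Summable fun m => |k m|)
    (hK : ∀ θ : ℝ, HasSum (fun m : ℕ => k (m + 1) * Real.cos (2 * (m + 1) * θ)) (K θ))
    (u : ℝ → ℝ) (hu : Measurable u)
    (hubd : ∃ M : ℝ, ∀ θ, |u θ| ≤ M) :
    ∀ n m : ℕ, 1 ≤ n → 1 ≤ m →
      (∫ θ in (0:ℝ)..(2 * π), DGammaU K u (phi n) θ * phi m θ) =
        k m * (mAvg u (fun t => Real.cos (2 * n * t)) * mAvg u (fun t => Real.cos (2 * m * t)) -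
          mAvg u (fun t => Real.cos (2 * n * t) * Real.cos (2 * m * t))) ∧
      |∫ θ in (0:ℝ)..(2 * π), DGammaU K u (phi n) θ * phi m θ| ≤ |k m| := by
  intro n m _ hm
  obtain ⟨M, hM⟩ := hubd
  have hentry : ∫ θ in (0:ℝ)..2 * π, DGammaU K u (phi n) θ * phi m θ =
      k m * (mAvg u (fun t => cos (2 * n * t)) * mAvg u (fun t => cos (2 * m * t)) -
        mAvg u (fun t => cos (2 * n * t) * cos (2 * m * t))) := by
    simp_rw [integral_DGammaU_phi_mul_phi hsum hK hu hM n hm, cos_eq_sqrt_pi_mul_phi,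
      mul_mul_mul_comm (√π) (phi n _), mAvg_const_mul]
    rw [mul_mul_mul_comm (√π) (mAvg u (phi n)), mul_self_sqrt pi_pos.le]
    ring
  refine ⟨hentry, ?_⟩
  rw [hentry, abs_mul]
  refine mul_le_of_le_one_right (abs_nonneg _) ?_
  simpa only [one_pow] using abs_mAvg_mul_sub_mAvg_mul_le hu hM (by fun_prop)
    (fun t => abs_cos_le_one (2 * n * t)) (by fun_prop) (fun t => abs_cos_le_one (2 * m * t))

/-- The matrix entries `a_{nm}(u) = ∫₀^{2π} DΓ[u](φₙ)(θ) φₘ(θ) dθ` satisfy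
`a_{nm}(u) = kₘ (∫cos(2nθ)dμ_u ∫cos(2mθ)dμ_u - ∫cos(2nθ)cos(2mθ)dμ_u)`, and in
particular `|a_{nm}(u)| ≤ |kₘ|`. -/
theorem matrix_entries_bound (K : ℝ → ℝ) (k : ℕ → ℝ)
    (hsum : Summable fun m => |k m|)
    (hK : ∀ θ : ℝ, HasSum (fun m : ℕ => k (m + 1) * Real.cos (2 * (m + 1) * θ)) (K θ))
    (u : ℝ → ℝ) (hu : Measurable u) (huper : Function.Periodic u (2 * π))
    (hubd : ∃ M : ℝ, ∀ θ, |u θ| ≤ M) :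
    ∀ n m : ℕ, 1 ≤ n → 1 ≤ m →
      (∫ θ in (0:ℝ)..(2 * π), DGammaU K u (phi n) θ * phi m θ) =
        k m * (mAvg u (fun t => Real.cos (2 * n * t)) * mAvg u (fun t => Real.cos (2 * m * t)) -
          mAvg u (fun t => Real.cos (2 * n * t) * Real.cos (2 * m * t))) ∧
      |∫ θ in (0:ℝ)..(2 * π), DGammaU K u (phi n) θ * phi m θ| ≤ |k m| :=
  matrix_entries_bound_general K k hsum hK u hu hubd
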